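/- Let V₁,…,V_n be vectors in ℝ^n and write ε(A₁,…,A_m; B₁,…,B_m) = det((A_i·B_j)_{i,j=1}^m). Then for indices μ, ν and r (with r+1,…,n valid indices), ε(V_μ, V_r, …, V_n; V_ν, V_r, …, V_n) · ε(V_{r+1}, …, V_n; V_{r+1}, …, V_n) = ε(V_μ, V_{r+1}, …, V_n; V_ν, V_{r+1}, …, V_n) · ε(V_r, …, V_n; V_r, …, V_n) − ε(V_μ, V_{r+1}, …, V_n; V_r, …, V_n) · ε(V_ν, V_{r+1}, …, V_n; V_r, …, V_n). -/

import Mathlib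

/-!
Both sides are minors of the Gram matrix `V * Vᵀ`: with rows `(μ, r, …, n-1)` and columns
`(ν, r, …, n-1)` the identity is the Desnanot–Jacobi (Lewis Carroll) identity, once the last factor
is transposed using the symmetry of `V * Vᵀ`. Desnanot–Jacobi is the `2 × 2` case of Jacobi's
theorem on complementary minors, `det (adj A)₁₁ = det A ^ (|m| - 1) * det A₂₂`, which follows by
multiplying `A` with the block matrix made of the first block column of `adj A` and an identity block.
-/

namespace Matrix

variable {R : Type*} [CommRing R]

section Jacobi

variable {m n : Type*} [Fintype m] [Fintype n] [DecidableEq m] [DecidableEq n]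

theorem mul_fromBlocks_adjugate_toBlocks (A : Matrix (m ⊕ n) (m ⊕ n) R) :
    A * fromBlocks A.adjugate.toBlocks₁₁ 0 A.adjugate.toBlocks₂₁ 1 =
      fromBlocks (A.det • 1) A.toBlocks₁₂ 0 A.toBlocks₂₂ := by
  set X := fromBlocks A.adjugate.toBlocks₁₁ 0 A.adjugate.toBlocks₂₁ (1 : Matrix n n R)
  have hX₁ : ∀ k j, X k (.inl j) = A.adjugate k (.inl j) := by rintro (k | k) j <;> rfl
  have hX₂ : ∀ k j, X k (.inr j) = (1 : Matrix (m ⊕ n) (m ⊕ n) R) k (.inr j) := by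
    rintro (k | k) j <;> simp [X, one_apply]
  ext i (j | j)
  · rw [mul_apply]
    simp_rw [hX₁]
    rw [← mul_apply, mul_adjugate]
    rcases i with i | i <;> simp [one_apply]
  · rw [mul_apply]
    simp_rw [hX₂]
    rw [← mul_apply, mul_one]
    rcases i with i | i <;> rfl

theorem det_mul_det_adjugate_toBlocks₁₁ (A : Matrix (m ⊕ n) (m ⊕ n) R) :
    A.det * A.adjugate.toBlocks₁₁.det = A.det ^ Fintype.card m * A.toBlocks₂₂.det := by
  simpa [det_fromBlocks_zero₁₂, det_fromBlocks_zero₂₁, det_smul] using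
    congrArg det (mul_fromBlocks_adjugate_toBlocks A)

theorem det_adjugate_toBlocks₁₁ [Nonempty m] (A : Matrix (m ⊕ n) (m ⊕ n) R) :
    A.adjugate.toBlocks₁₁.det = A.det ^ (Fintype.card m - 1) * A.toBlocks₂₂.det := by
  -- `det A` is cancelled for the generic matrix over `ℤ[X_ij]`, where it is not a zero divisor.
  let A' := mvPolynomialX (m ⊕ n) (m ⊕ n) ℤ
  suffices A'.adjugate.toBlocks₁₁.det = A'.det ^ (Fintype.card m - 1) * A'.toBlocks₂₂.det by
    let f : MvPolynomial ((m ⊕ n) × (m ⊕ n)) ℤ →ₐ[ℤ] R := MvPolynomial.aeval fun p ↦ A p.1 p.2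
    have hf := congrArg f this
    rw [map_mul, map_pow, AlgHom.map_det, AlgHom.map_det, AlgHom.map_det] at hf
    rwa [← mvPolynomialX_mapMatrix_aeval ℤ A, ← AlgHom.map_adjugate]
  apply mul_left_cancel₀ (det_mvPolynomialX_ne_zero (m ⊕ n) ℤ)
  rw [det_mul_det_adjugate_toBlocks₁₁, ← mul_assoc, ← pow_succ',
    Nat.sub_add_cancel Fintype.card_pos]

end Jacobi

theorem det_mul_det_submatrix_succ_succ {k : ℕ} (M : Matrix (Fin (k + 2)) (Fin (k + 2)) R) :
    M.det * (M.submatrix (fun i : Fin k ↦ i.succ.succ) fun i ↦ i.succ.succ).det =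
      (M.submatrix (Fin.succAbove 1) (Fin.succAbove 1)).det * (M.submatrix Fin.succ Fin.succ).det -
        (M.submatrix (Fin.succAbove 1) Fin.succ).det *
          (M.submatrix Fin.succ (Fin.succAbove 1)).det := by
  let e : Fin 2 ⊕ Fin k ≃ Fin (k + 2) := finSumFinEquiv.trans (finCongr (add_comm 2 k))
  have he₁ : e ∘ Sum.inl = ![0, 1] := by ext i; fin_cases i <;> rfl
  have he₂ : e ∘ Sum.inr = fun i ↦ i.succ.succ := by ext i; simp [e]
  have J := det_adjugate_toBlocks₁₁ (M.submatrix e e)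
  rw [adjugate_submatrix_equiv_self, det_submatrix_equiv_self] at J
  change ((adjugate M).submatrix (e ∘ Sum.inl) (e ∘ Sum.inl)).det =
    _ * (M.submatrix (e ∘ Sum.inr) (e ∘ Sum.inr)).det at J
  rw [he₁, he₂, det_fin_two] at J
  simpa [adjugate_fin_succ_eq_det_submatrix, mul_comm] using J.symm

theorem det_submatrix_cons_cons_mul_det {α β : Type*} {k : ℕ} (A : Matrix α β R) (x y : α)
    (x' y' : β) (w : Fin k → α) (w' : Fin k → β) :
    (A.submatrix (Fin.cons x (Fin.cons y w)) (Fin.cons x' (Fin.cons y' w'))).det *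
        (A.submatrix w w').det =
      (A.submatrix (Fin.cons x w) (Fin.cons x' w')).det *
          (A.submatrix (Fin.cons y w) (Fin.cons y' w')).det -
        (A.submatrix (Fin.cons x w) (Fin.cons y' w')).det *
          (A.submatrix (Fin.cons y w) (Fin.cons x' w')).det := by
  have h := det_mul_det_submatrix_succ_succ
    (A.submatrix (Fin.cons x (Fin.cons y w)) (Fin.cons x' (Fin.cons y' w')))
  simp only [submatrix_submatrix, ← Fin.succ_zero_eq_one, Fin.cons_comp_succ_succAbove,
    Fin.cons_comp_succ, Fin.removeNth_zero, Fin.tail_cons] at h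
  exact h

theorem IsSymm.det_submatrix_comm {α ι : Type*} [Fintype ι] [DecidableEq ι] {A : Matrix α α R}
    (hA : A.IsSymm) (f g : ι → α) : (A.submatrix f g).det = (A.submatrix g f).det := by
  rw [← det_transpose, transpose_submatrix, hA.eq]

theorem det_of_eq_det_submatrix_finCast {α β : Type*} {k l : ℕ} (h : k = l) (K : α → β → R)
    {f : Fin k → α} {g : Fin k → β} {f' : Fin l → α} {g' : Fin l → β}
    (hf : ∀ i, f i = f' (Fin.cast h i)) (hg : ∀ j, g j = g' (Fin.cast h j)) :
    (of fun i j ↦ K (f i) (g j)).det = ((of K).submatrix f' g').det := by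
  subst h
  simp only [Fin.cast_eq_self] at hf hg
  simp [hf, hg, submatrix]

end Matrix

theorem stmt_14 (n : ℕ) (V : Fin n → Fin n → ℝ) (μ ν : Fin n) (r : ℕ) (hr : r < n) :
    (Matrix.of fun i j : Fin (n - r + 1) =>
        ∑ t : Fin n,
          V (if i.1 = 0 then μ else ⟨r + i.1 - 1, by have := i.2; omega⟩) t *
          V (if j.1 = 0 then ν else ⟨r + j.1 - 1, by have := j.2; omega⟩) t).det *
      (Matrix.of fun i j : Fin (n - (r + 1)) =>
        ∑ t : Fin n,
          V ⟨r + 1 + i.1, by have := i.2; omega⟩ t *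
          V ⟨r + 1 + j.1, by have := j.2; omega⟩ t).det =
    (Matrix.of fun i j : Fin (n - r) =>
        ∑ t : Fin n,
          V (if i.1 = 0 then μ else ⟨r + i.1, by have := i.2; omega⟩) t *
          V (if j.1 = 0 then ν else ⟨r + j.1, by have := j.2; omega⟩) t).det *
      (Matrix.of fun i j : Fin (n - r) =>
        ∑ t : Fin n,
          V ⟨r + i.1, by have := i.2; omega⟩ t *
          V ⟨r + j.1, by have := j.2; omega⟩ t).det -
    (Matrix.of fun i j : Fin (n - r) =>
        ∑ t : Fin n,
          V (if i.1 = 0 then μ else ⟨r + i.1, by have := i.2; omega⟩) t *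
          V ⟨r + j.1, by have := j.2; omega⟩ t).det *
      (Matrix.of fun i j : Fin (n - r) =>
        ∑ t : Fin n,
          V (if i.1 = 0 then ν else ⟨r + i.1, by have := i.2; omega⟩) t *
          V ⟨r + j.1, by have := j.2; omega⟩ t).det := by
  set m := n - (r + 1)
  have hm : n - r = m + 1 := by omega
  let ρ : Fin n := ⟨r, hr⟩
  let w : Fin m → Fin n := fun i ↦ ⟨r + 1 + i, by omega⟩
  let K : Fin n → Fin n → ℝ := fun a b ↦ ∑ t, V a t * V b t
  have hρw : ∀ i : Fin (n - r),
      (⟨r + i.1, by omega⟩ : Fin n) = (Fin.cons ρ w : Fin (m + 1) → Fin n) (Fin.cast hm i) := by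
    rintro ⟨_ | i, hi⟩
    · rfl
    · exact Fin.ext (show r + (i + 1) = r + 1 + i by omega)
  have hxw : ∀ (x : Fin n) (i : Fin (n - r)), (if i.1 = 0 then x else ⟨r + i.1, by omega⟩) =
      (Fin.cons x w : Fin (m + 1) → Fin n) (Fin.cast hm i) := by
    rintro x ⟨_ | i, hi⟩
    · rfl
    · exact Fin.ext (show r + (i + 1) = r + 1 + i by omega)
  have hxρw : ∀ (x : Fin n) (i : Fin (n - r + 1)),
      (if i.1 = 0 then x else ⟨r + i.1 - 1, by omega⟩) =
        (Fin.cons x (Fin.cons ρ w) : Fin (m + 2) → Fin n) (Fin.cast (by omega) i) := by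
    rintro x ⟨_ | _ | i, hi⟩
    · rfl
    · rfl
    · exact Fin.ext (show r + (i + 2) - 1 = r + 1 + i by omega)
  have hK : (Matrix.of K).IsSymm := Matrix.isSymm_mul_transpose_self V
  have key := Matrix.det_submatrix_cons_cons_mul_det (Matrix.of K) μ ρ ν ρ w w
  rw [hK.det_submatrix_comm (Fin.cons ρ w) (Fin.cons ν w)] at key
  rw [Matrix.det_of_eq_det_submatrix_finCast _ K (hxρw μ) (hxρw ν),
    Matrix.det_of_eq_det_submatrix_finCast hm K (hxw μ) (hxw ν),
    Matrix.det_of_eq_det_submatrix_finCast hm K hρw hρw,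
    Matrix.det_of_eq_det_submatrix_finCast hm K (hxw μ) hρw,
    Matrix.det_of_eq_det_submatrix_finCast hm K (hxw ν) hρw]
  exact key
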